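/- arXiv:2504.11976 — 2 statements merged into one kernel-verified Lean document; each statement's English description precedes it below -/
import Mathlib

section
/- Let T ⊂ ℝ² be the equilateral triangle with vertices (0,1), (−√3/2,−1/2), (√3/2,−1/2), and let R be the rotation of ℝ² about the origin by angle 2π/3. For x ∈ T \ {0}, define Q(f;x) = w₁(x)·(f(x) + f(Rx) + f(R²x) − 3 f(0)) + (3√3/4)·f(0), where w₁(x) = √3/(16|x|²). Then for every polynomial f: ℝ² → ℝ of total degree at most 2 and every x ∈ T \ {0}, Q(f;x) = ∫_T f(y) dy. -/
open MeasureTheory MvPolynomial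


noncomputable def triT : Set (EuclideanSpace ℝ (Fin 2)) :=
  convexHull ℝ {(!₂[0, 1] : EuclideanSpace ℝ (Fin 2)),
    (!₂[-(Real.sqrt 3 / 2), -(1 / 2)] : EuclideanSpace ℝ (Fin 2)),
    (!₂[Real.sqrt 3 / 2, -(1 / 2)] : EuclideanSpace ℝ (Fin 2))}

lemma sqrt3_pos : (0:ℝ) < Real.sqrt 3 := Real.sqrt_pos.mpr (by norm_num)
lemma sqrt3_sq : Real.sqrt 3 ^ 2 = 3 := Real.sq_sqrt (by norm_num)
lemma sqrt3_mul_self : Real.sqrt 3 * Real.sqrt 3 = 3 := Real.mul_self_sqrt (by norm_num)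

noncomputable def triS : Set (EuclideanSpace ℝ (Fin 2)) :=
  {p | -(1/2) ≤ p 1 ∧ Real.sqrt 3 * |p 0| ≤ 1 - p 1}

lemma triS_convex : Convex ℝ triS := by
  have h1 : Convex ℝ {p : EuclideanSpace ℝ (Fin 2) | -(1/2) ≤ p 1} :=
    convex_halfSpace_ge (⟨fun p q => by simp [PiLp.add_apply],
      fun c p => by simp [PiLp.smul_apply]⟩ : IsLinearMap ℝ fun p : EuclideanSpace ℝ (Fin 2) => p 1) _
  have h2 : Convex ℝ {p : EuclideanSpace ℝ (Fin 2) | Real.sqrt 3 * p 0 + p 1 ≤ 1} :=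
    convex_halfSpace_le ⟨fun p q => by simp [PiLp.add_apply]; ring,
      fun c p => by simp [PiLp.smul_apply]; ring⟩ _
  have h3 : Convex ℝ {p : EuclideanSpace ℝ (Fin 2) | -(Real.sqrt 3 * p 0) + p 1 ≤ 1} :=
    convex_halfSpace_le ⟨fun p q => by simp [PiLp.add_apply]; ring,
      fun c p => by simp [PiLp.smul_apply]; ring⟩ _
  have : triS = {p : EuclideanSpace ℝ (Fin 2) | -(1/2) ≤ p 1} ∩
      ({p | Real.sqrt 3 * p 0 + p 1 ≤ 1} ∩ {p | -(Real.sqrt 3 * p 0) + p 1 ≤ 1}) := by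
    ext p
    simp only [triS, Set.mem_setOf_eq, Set.mem_inter_iff]
    constructor
    · rintro ⟨h, habs⟩
      rw [← abs_of_pos sqrt3_pos, ← abs_mul] at habs
      have := abs_le.mp habs
      exact ⟨h, by linarith [this.1, this.2], by linarith [this.1, this.2]⟩
    · rintro ⟨h, h2, h3⟩
      refine ⟨h, ?_⟩
      rw [← abs_of_pos sqrt3_pos, ← abs_mul]
      rw [abs_le]
      constructor <;> linarith
  rw [this]
  exact h1.inter (h2.inter h3)

lemma combo_mem {E : Type*} [AddCommGroup E] [Module ℝ E] {s : Set E} (h : Convex ℝ s)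
    {x y : E} (hx : x ∈ s) (hy : y ∈ s) {a b : ℝ} (ha : 0 ≤ a) (hb : 0 ≤ b)
    (hab : a + b = 1) : a • x + b • y ∈ s := h hx hy ha hb hab

lemma v0_mem : (!₂[0, 1] : EuclideanSpace ℝ (Fin 2)) ∈ triT :=
  subset_convexHull ℝ _ (Set.mem_insert _ _)
lemma v1_mem : (!₂[-(Real.sqrt 3 / 2), -(1 / 2)] : EuclideanSpace ℝ (Fin 2)) ∈ triT :=
  subset_convexHull ℝ _ (Set.mem_insert_iff.mpr (Or.inr (Set.mem_insert _ _)))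
lemma v2_mem : (!₂[Real.sqrt 3 / 2, -(1 / 2)] : EuclideanSpace ℝ (Fin 2)) ∈ triT :=
  subset_convexHull ℝ _ (Set.mem_insert_iff.mpr (Or.inr (Set.mem_insert_iff.mpr (Or.inr rfl))))
lemma triT_convex : Convex ℝ triT := convex_convexHull ℝ _

lemma triT_eq : triT = triS := by
  apply Set.Subset.antisymm
  · apply convexHull_min _ triS_convex
    intro p hp
    have h3 : Real.sqrt 3 ≤ 2 := by
      nlinarith [sqrt3_mul_self, sqrt3_pos]
    rcases hp with h | h | h <;> subst h <;>
      refine ⟨by norm_num [triS], ?_⟩ <;>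
      simp only [triS, Set.mem_setOf_eq, PiLp.toLp_apply, Matrix.cons_val_zero, Matrix.cons_val_one,
        Matrix.head_cons, abs_neg]
    · norm_num
    all_goals
      rw [abs_of_nonneg (by positivity)]
      nlinarith [sqrt3_mul_self]
  · intro p hp
    obtain ⟨h1, h2⟩ := hp
    have habs : 0 ≤ Real.sqrt 3 * |p 0| := by positivity
    have hle1 : p 1 ≤ 1 := by linarith
    by_cases hcase : p 1 = 1
    · have hx : p 0 = 0 := by
        rw [hcase] at h2
        have h0 := abs_nonneg (p 0)
        have : |p 0| = 0 := by nlinarith [sqrt3_pos]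
        exact abs_eq_zero.mp this
      have hpv : p = (!₂[0, 1] : EuclideanSpace ℝ (Fin 2)) := by
        ext i; fin_cases i <;> simp [hx, hcase]
      rw [hpv]
      exact v0_mem
    · have ht : p 1 < 1 := lt_of_le_of_ne hle1 hcase
      set t := p 1 with htdef
      set x := p 0 with hxdef
      set mx : ℝ := 3 * x / (2 * (1 - t)) with hmx
      set μ : ℝ := 1 / 2 - mx / Real.sqrt 3 with hμ
      have h2' : Real.sqrt 3 * Real.sqrt 3 * |x| ≤ Real.sqrt 3 * (1 - t) := by
        calc Real.sqrt 3 * Real.sqrt 3 * |x| = Real.sqrt 3 * (Real.sqrt 3 * |x|) := by ring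
        _ ≤ Real.sqrt 3 * (1 - t) := by
            exact mul_le_mul_of_nonneg_left h2 sqrt3_pos.le
      have hmxabs : |mx| ≤ Real.sqrt 3 / 2 := by
        rw [hmx, abs_div, abs_of_pos (by linarith : (0:ℝ) < 2 * (1 - t)), abs_mul,
          abs_of_pos (by norm_num : (0:ℝ) < 3), div_le_iff₀ (by linarith)]
        nlinarith [sqrt3_mul_self, abs_nonneg x]
      have hμ0 : 0 ≤ μ := by
        rw [hμ, sub_nonneg, div_le_iff₀ sqrt3_pos]
        have := (abs_le.mp hmxabs).2
        nlinarith [sqrt3_mul_self]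
      have hμ1 : μ ≤ 1 := by
        rw [hμ]
        have := (abs_le.mp hmxabs).1
        have hd : -(1/2 : ℝ) ≤ mx / Real.sqrt 3 := by
          rw [le_div_iff₀ sqrt3_pos]
          nlinarith [sqrt3_mul_self]
        linarith
      set v1 : EuclideanSpace ℝ (Fin 2) := !₂[-(Real.sqrt 3 / 2), -(1 / 2)] with hv1
      set v2 : EuclideanSpace ℝ (Fin 2) := !₂[Real.sqrt 3 / 2, -(1 / 2)] with hv2
      set m : EuclideanSpace ℝ (Fin 2) := μ • v1 + (1 - μ) • v2 with hm
      have hmT : m ∈ triT := by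
        rw [hm, hv1, hv2]
        exact combo_mem triT_convex v1_mem v2_mem hμ0 (by linarith) (by ring)
      have hL0 : (0:ℝ) ≤ (2 * t + 1) / 3 := by linarith
      have hL1 : (2 * t + 1) / 3 ≤ 1 := by linarith
      obtain ⟨v0, hv0⟩ : ∃ v : EuclideanSpace ℝ (Fin 2), v = !₂[0, 1] := ⟨_, rfl⟩
      have hps : p = ((2 * t + 1) / 3) • v0 +
          (1 - (2 * t + 1) / 3) • m := by
        have h1t : (1 : ℝ) - t ≠ 0 := by linarith
        ext i
        fin_cases i
        · show x = _
          simp only [Fin.mk_zero, Fin.mk_one, hm, hv0, hv1, hv2, PiLp.add_apply, PiLp.smul_apply, PiLp.toLp_apply, Matrix.cons_val_zero,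
            smul_eq_mul]
          rw [hμ, hmx]
          field_simp
          ring
        · show t = _
          simp only [Fin.mk_zero, Fin.mk_one, hm, hv0, hv1, hv2, PiLp.add_apply, PiLp.smul_apply, PiLp.toLp_apply, Matrix.cons_val_one,
            Matrix.head_cons, Matrix.cons_val_zero, smul_eq_mul]
          ring
      rw [hps]
      exact combo_mem triT_convex (hv0 ▸ v0_mem) hmT hL0 (by linarith) (by ring)

def triS2 : Set (ℝ × ℝ) := {z | -(1/2) ≤ z.2 ∧ Real.sqrt 3 * |z.1| ≤ 1 - z.2}

lemma triS2_closed : IsClosed triS2 := by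
  apply IsClosed.inter
  · exact isClosed_le continuous_const continuous_snd
  · exact isClosed_le (continuous_const.mul (continuous_abs.comp continuous_fst))
      (continuous_const.sub continuous_snd)

lemma triS2_compact : IsCompact triS2 := by
  refine (isCompact_Icc (a := ((-1 : ℝ), (-1/2 : ℝ))) (b := ((1:ℝ), (1:ℝ)))).of_isClosed_subset
    triS2_closed ?_
  rintro ⟨x, y⟩ ⟨h1, h2⟩
  have hax : Real.sqrt 3 * |x| ≤ 3/2 := by
    simp only at h1 h2; linarith
  have hx : |x| ≤ 1 := by
    nlinarith [sqrt3_mul_self, sqrt3_pos, abs_nonneg x]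
  have := abs_le.mp hx
  have h3 : 0 ≤ Real.sqrt 3 * |x| := by positivity
  constructor <;> constructor <;> simp only at * <;> linarith

lemma triS2_meas : MeasurableSet triS2 := triS2_closed.measurableSet

noncomputable def triPsi : (ℝ × ℝ) ≃ᵐ EuclideanSpace ℝ (Fin 2) :=
  (MeasurableEquiv.finTwoArrow (α := ℝ)).symm.trans
    (MeasurableEquiv.toLp 2 (Fin 2 → ℝ))

lemma triPsi_apply0 (z : ℝ × ℝ) : triPsi z 0 = z.1 := rfl
lemma triPsi_apply1 (z : ℝ × ℝ) : triPsi z 1 = z.2 := rfl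

lemma triPsi_mp : MeasurePreserving triPsi volume volume :=
  ((EuclideanSpace.volume_preserving_symm_measurableEquiv_toLp (Fin 2)).symm).comp
    ((volume_preserving_finTwoArrow ℝ).symm)

lemma transfer (F : ℝ → ℝ → ℝ) :
    ∫ p in triT, F (p 0) (p 1) = ∫ z in triS2, F z.1 z.2 := by
  have h := triPsi_mp.setIntegral_preimage_emb triPsi.measurableEmbedding
    (fun p => F (p 0) (p 1)) triT
  rw [← h]
  have hpre : triPsi ⁻¹' triT = triS2 := by
    ext z
    simp only [Set.mem_preimage, triT_eq, triS, Set.mem_setOf_eq, triS2,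
      triPsi_apply0, triPsi_apply1]
  rw [hpre]
  rfl

noncomputable def triw (y : ℝ) : ℝ := (1 - y) * Real.sqrt 3 / 3

lemma triw_nonneg {y : ℝ} (hy : y ≤ 1) : 0 ≤ triw y := by
  unfold triw
  exact div_nonneg (mul_nonneg (by linarith) sqrt3_pos.le) (by norm_num)

lemma mem_triS2_iff {x y : ℝ} (hy : -(1/2) ≤ y) :
    ((x, y) ∈ triS2) ↔ x ∈ Set.Icc (-(triw y)) (triw y) := by
  simp only [triS2, Set.mem_setOf_eq, Set.mem_Icc, hy, true_and]
  rw [← abs_le]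
  constructor
  · intro h
    rw [triw]
    rw [le_div_iff₀ (by norm_num : (0:ℝ) < 3)]
    nlinarith [sqrt3_mul_self, abs_nonneg x, sqrt3_pos]
  · intro h
    rw [triw, le_div_iff₀ (by norm_num : (0:ℝ) < 3)] at h
    nlinarith [sqrt3_mul_self, abs_nonneg x, sqrt3_pos]

lemma fubini (F : ℝ → ℝ → ℝ) (hF : Continuous (fun z : ℝ × ℝ => F z.1 z.2)) :
    ∫ z in triS2, F z.1 z.2 =
      ∫ y in Set.Icc (-(1/2) : ℝ) 1, ∫ x in Set.Icc (-(triw y)) (triw y), F x y := by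
  have hInt : IntegrableOn (fun z : ℝ × ℝ => F z.1 z.2) triS2 volume :=
    hF.continuousOn.integrableOn_compact triS2_compact
  have hInd : Integrable (triS2.indicator fun z : ℝ × ℝ => F z.1 z.2) volume :=
    hInt.integrable_indicator triS2_meas
  rw [← integral_indicator triS2_meas]
  rw [Measure.volume_eq_prod] at hInd ⊢
  rw [integral_prod_symm _ hInd]
  have key : ∀ y : ℝ, (∫ x, triS2.indicator (fun z : ℝ × ℝ => F z.1 z.2) (x, y)) =
      (Set.Icc (-(1/2) : ℝ) 1).indicator
        (fun y => ∫ x in Set.Icc (-(triw y)) (triw y), F x y) y := by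
    intro y
    by_cases hy : -(1/2) ≤ y
    · have hfun : (fun x => triS2.indicator (fun z : ℝ × ℝ => F z.1 z.2) (x, y)) =
          (Set.Icc (-(triw y)) (triw y)).indicator (fun x => F x y) := by
        funext x
        by_cases hx : x ∈ Set.Icc (-(triw y)) (triw y)
        · rw [Set.indicator_of_mem hx, Set.indicator_of_mem ((mem_triS2_iff hy).mpr hx)]
        · rw [Set.indicator_of_notMem hx,
            Set.indicator_of_notMem (fun h => hx ((mem_triS2_iff hy).mp h))]
      rw [hfun, integral_indicator measurableSet_Icc]
      by_cases hy1 : y ≤ 1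
      · rw [Set.indicator_of_mem (Set.mem_Icc.mpr ⟨hy, hy1⟩)]
      · have hw : triw y < 0 := by
          unfold triw
          rw [div_neg_iff]
          right
          constructor
          · nlinarith [sqrt3_pos]
          · norm_num
        rw [Set.Icc_eq_empty (by intro h; nlinarith), Set.indicator_of_notMem
          (by simp [Set.mem_Icc]; intro h; linarith)]
        simp
    · have hfun : (fun x => triS2.indicator (fun z : ℝ × ℝ => F z.1 z.2) (x, y)) =
          fun _ => (0:ℝ) := by
        funext x
        apply Set.indicator_of_notMem
        intro h
        exact hy h.1
      rw [hfun, Set.indicator_of_notMem (by simp [Set.mem_Icc]; intro h; linarith)]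
      simp
  rw [show (fun y => ∫ x, triS2.indicator (fun z : ℝ × ℝ => F z.1 z.2) (x, y)) =
    (Set.Icc (-(1/2) : ℝ) 1).indicator
        (fun y => ∫ x in Set.Icc (-(triw y)) (triw y), F x y) from funext key]
  rw [integral_indicator measurableSet_Icc]

lemma poly_integral (C0 C1 C2 C3 u v : ℝ) :
    ∫ x in u..v, (C0 + C1 * x + C2 * x ^ 2 + C3 * x ^ 3) =
      (C0 * v + C1 * v ^ 2 / 2 + C2 * v ^ 3 / 3 + C3 * v ^ 4 / 4) -
      (C0 * u + C1 * u ^ 2 / 2 + C2 * u ^ 3 / 3 + C3 * u ^ 4 / 4) := by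
  have hderiv : ∀ x ∈ Set.uIcc u v,
      HasDerivAt (fun x => C0 * x + C1 * x ^ 2 / 2 + C2 * x ^ 3 / 3 + C3 * x ^ 4 / 4)
        (C0 + C1 * x + C2 * x ^ 2 + C3 * x ^ 3) x := by
    intro x _
    have h0 : HasDerivAt (fun x : ℝ => C0 * x) C0 x := by
      simpa using (hasDerivAt_id x).const_mul C0
    have h1 : HasDerivAt (fun x : ℝ => C1 * x ^ 2 / 2) (C1 * x) x := by
      have := ((hasDerivAt_pow 2 x).const_mul C1).div_const 2
      simpa using this.congr_deriv (by ring)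
    have h2 : HasDerivAt (fun x : ℝ => C2 * x ^ 3 / 3) (C2 * x ^ 2) x := by
      have := ((hasDerivAt_pow 3 x).const_mul C2).div_const 3
      simpa using this.congr_deriv (by ring)
    have h3 : HasDerivAt (fun x : ℝ => C3 * x ^ 4 / 4) (C3 * x ^ 3) x := by
      have := ((hasDerivAt_pow 4 x).const_mul C3).div_const 4
      simpa using this.congr_deriv (by ring)
    exact ((h0.add h1).add h2).add h3
  rw [intervalIntegral.integral_eq_sub_of_hasDerivAt hderiv
    (Continuous.intervalIntegrable (by continuity) _ _)]

lemma inner_calc (A B D w : ℝ) :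
    ∫ x in (-w)..w, (A + B * x + D * x ^ 2 + 0 * x ^ 3) =
      2 * A * w + 2 / 3 * D * w ^ 3 := by
  rw [poly_integral]; ring

lemma outer_calc (a c d f s : ℝ) (hs : s ^ 2 = 3) :
    ∫ y in (-(1/2) : ℝ)..1,
        (2 * (a + c * y + f * y ^ 2) * ((1 - y) * s / 3) + 2 / 3 * d * ((1 - y) * s / 3) ^ 3) =
      3 * s / 4 * a + 3 * s / 32 * (d + f) := by
  have hcongr : ∀ y : ℝ,
      (2 * (a + c * y + f * y ^ 2) * ((1 - y) * s / 3) + 2 / 3 * d * ((1 - y) * s / 3) ^ 3) =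
      ((2 * s * a / 3 + 2 * s * d / 27) + (2 * s / 3 * (c - a) - 2 * s * d / 9) * y +
        (2 * s / 3 * (f - c) + 2 * s * d / 9) * y ^ 2 + (-(2 * s / 3) * f - 2 * s * d / 27) * y ^ 3) := by
    intro y
    linear_combination (2 * d * (1 - y) ^ 3 * s / 81) * hs
  rw [intervalIntegral.integral_congr (g := fun y =>
      ((2 * s * a / 3 + 2 * s * d / 27) + (2 * s / 3 * (c - a) - 2 * s * d / 9) * y +
        (2 * s / 3 * (f - c) + 2 * s * d / 9) * y ^ 2 + (-(2 * s / 3) * f - 2 * s * d / 27) * y ^ 3))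
      (fun y _ => hcongr y)]
  rw [poly_integral]
  ring

lemma triT_integral (a b c d e f : ℝ) :
    ∫ p in triT, (a + b * p 0 + c * p 1 + d * p 0 ^ 2 + e * (p 0 * p 1) + f * p 1 ^ 2) =
      3 * Real.sqrt 3 / 4 * a + 3 * Real.sqrt 3 / 32 * (d + f) := by
  have ht := transfer (fun u v => a + b * u + c * v + d * u ^ 2 + e * (u * v) + f * v ^ 2)
  simp only at ht
  have hf := fubini (fun u v => a + b * u + c * v + d * u ^ 2 + e * (u * v) + f * v ^ 2)
    (by continuity)
  rw [ht, hf]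
  have hinner : ∀ y ∈ Set.Icc (-(1/2) : ℝ) 1,
      (∫ x in Set.Icc (-(triw y)) (triw y),
        (a + b * x + c * y + d * x ^ 2 + e * (x * y) + f * y ^ 2)) =
      2 * (a + c * y + f * y ^ 2) * triw y + 2 / 3 * d * (triw y) ^ 3 := by
    intro y hy
    have hw : 0 ≤ triw y := triw_nonneg hy.2
    rw [integral_Icc_eq_integral_Ioc, ← intervalIntegral.integral_of_le (show -triw y ≤ triw y by linarith)]
    rw [intervalIntegral.integral_congr (g := fun x =>
      (a + c * y + f * y ^ 2) + (b + e * y) * x + d * x ^ 2 + 0 * x ^ 3)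
      (fun x _ => by ring)]
    rw [inner_calc]
  rw [setIntegral_congr_fun measurableSet_Icc hinner]
  rw [integral_Icc_eq_integral_Ioc, ← intervalIntegral.integral_of_le (show -(1/2:ℝ) ≤ 1 by norm_num)]
  have ho := outer_calc a c d f (Real.sqrt 3) (Real.sq_sqrt (by norm_num))
  simpa only [triw] using ho

lemma fs_ne {u v : Fin 2 →₀ ℕ} (h : u 0 ≠ v 0 ∨ u 1 ≠ v 1) : u ≠ v := by
  rintro rfl
  rcases h with h | h <;> exact h rfl

lemma poly_decomp (q : MvPolynomial (Fin 2) ℝ) (hq : q.totalDegree ≤ 2) (y : Fin 2 → ℝ) :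
    eval y q =
      coeff 0 q + coeff (Finsupp.single 0 1) q * y 0 + coeff (Finsupp.single 1 1) q * y 1 +
      coeff (Finsupp.single 0 2) q * y 0 ^ 2 +
      coeff (Finsupp.single 0 1 + Finsupp.single 1 1) q * (y 0 * y 1) +
      coeff (Finsupp.single 1 2) q * y 1 ^ 2 := by
  classical
  set m00 : Fin 2 →₀ ℕ := 0 with hm00
  set m10 : Fin 2 →₀ ℕ := Finsupp.single 0 1 with hm10
  set m01 : Fin 2 →₀ ℕ := Finsupp.single 1 1 with hm01
  set m20 : Fin 2 →₀ ℕ := Finsupp.single 0 2 with hm20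
  set m11 : Fin 2 →₀ ℕ := Finsupp.single 0 1 + Finsupp.single 1 1 with hm11
  set m02 : Fin 2 →₀ ℕ := Finsupp.single 1 2 with hm02
  have v00 : m00 0 = 0 ∧ m00 1 = 0 := by simp [hm00]
  have v10 : m10 0 = 1 ∧ m10 1 = 0 := by simp [hm10, Finsupp.single_apply]
  have v01 : m01 0 = 0 ∧ m01 1 = 1 := by simp [hm01, Finsupp.single_apply]
  have v20 : m20 0 = 2 ∧ m20 1 = 0 := by simp [hm20, Finsupp.single_apply]
  have v11 : m11 0 = 1 ∧ m11 1 = 1 := by simp [hm11, Finsupp.single_apply]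
  have v02 : m02 0 = 0 ∧ m02 1 = 2 := by simp [hm02, Finsupp.single_apply]
  set S6 : Finset (Fin 2 →₀ ℕ) := {m00, m10, m01, m20, m11, m02} with hS6
  have hsub : q.support ⊆ S6 := by
    intro m hm
    have hdeg : m 0 + m 1 ≤ 2 := by
      have h1 : m.sum (fun _ e => e) ≤ q.totalDegree := MvPolynomial.le_totalDegree hm
      have h2 : m.sum (fun _ e => e) = m 0 + m 1 := by
        rw [Finsupp.sum_fintype _ _ (fun _ => rfl), Fin.sum_univ_two]
      omega
    have hde : m = Finsupp.single 0 (m 0) + Finsupp.single 1 (m 1) := by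
      ext i
      fin_cases i <;> simp [Finsupp.single_apply]
    simp only [hS6, Finset.mem_insert, Finset.mem_singleton]
    have h0 : m 0 = 0 ∨ m 0 = 1 ∨ m 0 = 2 := by omega
    have h1 : m 1 = 0 ∨ m 1 = 1 ∨ m 1 = 2 := by omega
    rcases h0 with h0 | h0 | h0 <;> rcases h1 with h1 | h1 | h1 <;>
      rw [hde, h0, h1] <;> simp [hm00, hm10, hm01, hm20, hm11, hm02] <;> omega
  rw [eval_eq']
  rw [Finset.sum_subset hsub (fun m _ hm => by
    simp [MvPolynomial.notMem_support_iff.mp hm])]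
  have hne1 : m00 ∉ ({m10, m01, m20, m11, m02} : Finset _) := by
    simp only [Finset.mem_insert, Finset.mem_singleton]
    push_neg
    exact ⟨fs_ne (Or.inl (by omega)), fs_ne (Or.inr (by omega)), fs_ne (Or.inl (by omega)),
      fs_ne (Or.inl (by omega)), fs_ne (Or.inr (by omega))⟩
  have hne2 : m10 ∉ ({m01, m20, m11, m02} : Finset _) := by
    simp only [Finset.mem_insert, Finset.mem_singleton]
    push_neg
    exact ⟨fs_ne (Or.inl (by omega)), fs_ne (Or.inl (by omega)),
      fs_ne (Or.inr (by omega)), fs_ne (Or.inl (by omega))⟩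
  have hne3 : m01 ∉ ({m20, m11, m02} : Finset _) := by
    simp only [Finset.mem_insert, Finset.mem_singleton]
    push_neg
    exact ⟨fs_ne (Or.inl (by omega)), fs_ne (Or.inl (by omega)), fs_ne (Or.inr (by omega))⟩
  have hne4 : m20 ∉ ({m11, m02} : Finset _) := by
    simp only [Finset.mem_insert, Finset.mem_singleton]
    push_neg
    exact ⟨fs_ne (Or.inl (by omega)), fs_ne (Or.inl (by omega))⟩
  have hne5 : m11 ∉ ({m02} : Finset _) := by
    simp only [Finset.mem_singleton]
    exact fs_ne (Or.inl (by omega))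
  rw [hS6, Finset.sum_insert hne1, Finset.sum_insert hne2, Finset.sum_insert hne3,
    Finset.sum_insert hne4, Finset.sum_insert hne5, Finset.sum_singleton]
  simp only [Fin.prod_univ_two, v00.1, v00.2, v10.1, v10.2, v01.1, v01.2, v20.1, v20.2,
    v11.1, v11.2, v02.1, v02.2]
  rw [hm00, hm10, hm01, hm20, hm11, hm02]
  ring

noncomputable def triR : EuclideanSpace ℝ (Fin 2) →ₗ[ℝ] EuclideanSpace ℝ (Fin 2) :=
  Matrix.toEuclideanLin
    !![-(1 / 2 : ℝ), -(Real.sqrt 3 / 2); Real.sqrt 3 / 2, -(1 / 2)]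

noncomputable def triQ2 (f : EuclideanSpace ℝ (Fin 2) → ℝ)
    (x : EuclideanSpace ℝ (Fin 2)) : ℝ :=
  (Real.sqrt 3 / (16 * ‖x‖ ^ 2)) * (f x + f (triR x) + f (triR (triR x)) - 3 * f 0) +
    (3 * Real.sqrt 3 / 4) * f 0

lemma triR_apply0 (p : EuclideanSpace ℝ (Fin 2)) :
    triR p 0 = -(1 / 2) * p 0 + -(Real.sqrt 3 / 2) * p 1 := by
  show Matrix.toEuclideanLin _ p 0 = _
  rw [Matrix.toEuclideanLin_apply]
  simp [Matrix.mulVec, dotProduct, Fin.sum_univ_two]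

lemma triR_apply1 (p : EuclideanSpace ℝ (Fin 2)) :
    triR p 1 = Real.sqrt 3 / 2 * p 0 + -(1 / 2) * p 1 := by
  show Matrix.toEuclideanLin _ p 1 = _
  rw [Matrix.toEuclideanLin_apply]
  simp [Matrix.mulVec, dotProduct, Fin.sum_univ_two]

/-- The rule `P₂^tri` integrates exactly every polynomial of total
degree at most `2` on the triangle, for every nonzero sample point `x ∈ T`. -/
theorem stmt_8 (q : MvPolynomial (Fin 2) ℝ) (hq : q.totalDegree ≤ 2) :
    ∀ x ∈ triT \ {0},
      triQ2 (fun y => MvPolynomial.eval y q) x = ∫ y in triT, MvPolynomial.eval y q := by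
  intro x hx
  obtain ⟨hxT, hx0⟩ := hx
  have hx0' : x ≠ 0 := hx0
  obtain ⟨a, b, c, d, e, f, hF⟩ : ∃ a b c d e f : ℝ,
      ∀ y : EuclideanSpace ℝ (Fin 2),
        eval y q = a + b * y 0 + c * y 1 + d * y 0 ^ 2 + e * (y 0 * y 1) + f * y 1 ^ 2 :=
    ⟨_, _, _, _, _, _, fun y => poly_decomp q hq y⟩
  have hRHS : (∫ y in triT, eval y q) =
      3 * Real.sqrt 3 / 4 * a + 3 * Real.sqrt 3 / 32 * (d + f) := by
    rw [show (fun y : EuclideanSpace ℝ (Fin 2) => eval y q) =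
      fun p => a + b * p 0 + c * p 1 + d * p 0 ^ 2 + e * (p 0 * p 1) + f * p 1 ^ 2
      from funext hF]
    exact triT_integral a b c d e f
  rw [hRHS]
  have hnorm : ‖x‖ ^ 2 = x 0 ^ 2 + x 1 ^ 2 := by
    rw [EuclideanSpace.norm_eq, Real.sq_sqrt (by positivity)]
    simp [Fin.sum_univ_two, sq_abs]
  have hne : x 0 ^ 2 + x 1 ^ 2 ≠ 0 := by
    intro h
    apply hx0'
    have h0 : x 0 = 0 := by nlinarith [sq_nonneg (x 0), sq_nonneg (x 1)]
    have h1 : x 1 = 0 := by nlinarith [sq_nonneg (x 0), sq_nonneg (x 1)]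
    ext i
    fin_cases i
    · exact h0
    · exact h1
  have hzero : (0 : EuclideanSpace ℝ (Fin 2)) 0 = 0 ∧ (0 : EuclideanSpace ℝ (Fin 2)) 1 = 0 :=
    ⟨rfl, rfl⟩
  have hs2 : Real.sqrt 3 ^ 2 = 3 := Real.sq_sqrt (by norm_num)
  unfold triQ2
  simp only [hF, hzero.1, hzero.2, triR_apply0, triR_apply1, hnorm]
  set u := x 0
  set v := x 1
  have key : (a + b * u + c * v + d * u ^ 2 + e * (u * v) + f * v ^ 2)
      + (a + b * (-(1/2) * u + -(Real.sqrt 3 / 2) * v) + c * (Real.sqrt 3 / 2 * u + -(1/2) * v)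
        + d * (-(1/2) * u + -(Real.sqrt 3 / 2) * v) ^ 2
        + e * ((-(1/2) * u + -(Real.sqrt 3 / 2) * v) * (Real.sqrt 3 / 2 * u + -(1/2) * v))
        + f * (Real.sqrt 3 / 2 * u + -(1/2) * v) ^ 2)
      + (a + b * (-(1/2) * (-(1/2) * u + -(Real.sqrt 3 / 2) * v)
            + -(Real.sqrt 3 / 2) * (Real.sqrt 3 / 2 * u + -(1/2) * v))
        + c * (Real.sqrt 3 / 2 * (-(1/2) * u + -(Real.sqrt 3 / 2) * v)
            + -(1/2) * (Real.sqrt 3 / 2 * u + -(1/2) * v))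
        + d * (-(1/2) * (-(1/2) * u + -(Real.sqrt 3 / 2) * v)
            + -(Real.sqrt 3 / 2) * (Real.sqrt 3 / 2 * u + -(1/2) * v)) ^ 2
        + e * ((-(1/2) * (-(1/2) * u + -(Real.sqrt 3 / 2) * v)
            + -(Real.sqrt 3 / 2) * (Real.sqrt 3 / 2 * u + -(1/2) * v))
            * (Real.sqrt 3 / 2 * (-(1/2) * u + -(Real.sqrt 3 / 2) * v)
            + -(1/2) * (Real.sqrt 3 / 2 * u + -(1/2) * v)))
        + f * (Real.sqrt 3 / 2 * (-(1/2) * u + -(Real.sqrt 3 / 2) * v)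
            + -(1/2) * (Real.sqrt 3 / 2 * u + -(1/2) * v)) ^ 2)
      - 3 * (a + b * 0 + c * 0 + d * 0 ^ 2 + e * (0 * 0) + f * 0 ^ 2)
      = 3 / 2 * (d + f) * (u ^ 2 + v ^ 2) := by
    linear_combination ((-1/4) * v * c + (1/16) * v ^ 2 * f + (1/16) * v ^ 2 * f * Real.sqrt 3 ^ 2 +
      (-1/8) * v ^ 2 * e * Real.sqrt 3 + (1/2) * v ^ 2 * d + (-1/4) * u * b +
      (1/4) * u * v * f * Real.sqrt 3 + (-7/16) * u * v * e + (1/16) * u * v * e * Real.sqrt 3 ^ 2 +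
      (-1/4) * u * v * d * Real.sqrt 3 + (1/2) * u ^ 2 * f + (1/8) * u ^ 2 * e * Real.sqrt 3 +
      (1/16) * u ^ 2 * d + (1/16) * u ^ 2 * d * Real.sqrt 3 ^ 2) * hs2
  rw [key]
  field_simp
  ring
end

section
/- Consider the two-point biased quadrature rule on [−1,1]: for x₁ ∈ (0,1) and x₂ ∈ (−1,0), set w₁ = 2x₂/(x₂ − x₁), w₂ = −2x₁/(x₂ − x₁), and Q(f; x₁, x₂) = w₁ f(x₁) + w₂ f(x₂). Then for every continuous f: [−1,1] → ℝ, the expectation of Q when x₁ is uniform on (0,1) and x₂ is uniform on (−1,0), independently, satisfies ∫₀¹ ∫_{−1}^0 Q(f; x₁, x₂) dx₂ dx₁ = ∫_{−1}^1 f(x) W₀(x) dx, where W₀(x) = 2 + 2|x| ln(|x|/(1+|x|)). -/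
open MeasureTheory

lemma Ia (a : ℝ) (ha : 0 < a) :
    ∫ x in (-1:ℝ)..0, 2 * x / (x - a) = 2 + 2 * a * Real.log (a / (1 + a)) := by
  have h1 : Set.EqOn (fun x : ℝ => 2 * x / (x - a)) (fun x => 2 + 2 * a * (x - a)⁻¹)
      (Set.uIcc (-1:ℝ) 0) := by
    intro x hx
    rw [Set.uIcc_of_le (by norm_num : (-1:ℝ) ≤ 0)] at hx
    have hne : x - a ≠ 0 := by nlinarith [hx.2]
    field_simp
    ring
  rw [intervalIntegral.integral_congr h1]
  have key : ∀ x ∈ Set.uIcc (-1:ℝ) 0,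
      HasDerivAt (fun x => 2 * x + 2 * a * Real.log (a - x)) (2 + 2 * a * (x - a)⁻¹) x := by
    intro x hx
    rw [Set.uIcc_of_le (by norm_num : (-1:ℝ) ≤ 0)] at hx
    have hne : a - x ≠ 0 := by nlinarith [hx.2]
    have h2 : HasDerivAt (fun x : ℝ => Real.log (a - x)) (-1 / (a - x)) x := by
      have := (((hasDerivAt_id x).const_sub a)).log hne
      simpa using this
    have := ((hasDerivAt_id x).const_mul 2).add (h2.const_mul (2 * a))
    refine this.congr_deriv ?_
    rw [show x - a = -(a - x) by ring, inv_neg]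
    ring
  have hint : IntervalIntegrable (fun x => 2 + 2 * a * (x - a)⁻¹) volume (-1) 0 := by
    apply ContinuousOn.intervalIntegrable
    intro x hx
    rw [Set.uIcc_of_le (by norm_num : (-1:ℝ) ≤ 0)] at hx
    have hne : x - a ≠ 0 := by nlinarith [hx.2]
    exact (continuousAt_const.add (continuousAt_const.mul
      (((continuousAt_id.sub continuousAt_const)).inv₀ hne))).continuousWithinAt
  rw [intervalIntegral.integral_eq_sub_of_hasDerivAt key hint]
  have h0 : a - (0:ℝ) = a := by ring
  have hm : a - (-1:ℝ) = 1 + a := by ring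
  rw [h0, hm, Real.log_div (ne_of_gt ha) (by positivity)]
  ring

lemma Ib (b : ℝ) (hb : b < 0) :
    ∫ x in (0:ℝ)..1, -(2 * x) / (b - x) = 2 + 2 * (-b) * Real.log ((-b) / (1 + -b)) := by
  have h1 : Set.EqOn (fun x : ℝ => -(2 * x) / (b - x)) (fun x => 2 + 2 * b * (x - b)⁻¹)
      (Set.uIcc (0:ℝ) 1) := by
    intro x hx
    rw [Set.uIcc_of_le (by norm_num : (0:ℝ) ≤ 1)] at hx
    have hne : x - b ≠ 0 := by nlinarith [hx.1]
    have hne' : b - x ≠ 0 := by nlinarith [hx.1]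
    field_simp
    ring
  rw [intervalIntegral.integral_congr h1]
  have key : ∀ x ∈ Set.uIcc (0:ℝ) 1,
      HasDerivAt (fun x => 2 * x + 2 * b * Real.log (x - b)) (2 + 2 * b * (x - b)⁻¹) x := by
    intro x hx
    rw [Set.uIcc_of_le (by norm_num : (0:ℝ) ≤ 1)] at hx
    have hne : x - b ≠ 0 := by nlinarith [hx.1]
    have h2 : HasDerivAt (fun x : ℝ => Real.log (x - b)) (1 / (x - b)) x := by
      have := (((hasDerivAt_id x).sub_const b)).log hne
      simpa using this
    have := ((hasDerivAt_id x).const_mul 2).add (h2.const_mul (2 * b))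
    refine this.congr_deriv ?_
    ring
  have hint : IntervalIntegrable (fun x => 2 + 2 * b * (x - b)⁻¹) volume 0 1 := by
    apply ContinuousOn.intervalIntegrable
    intro x hx
    rw [Set.uIcc_of_le (by norm_num : (0:ℝ) ≤ 1)] at hx
    have hne : x - b ≠ 0 := by nlinarith [hx.1]
    exact (continuousAt_const.add (continuousAt_const.mul
      (((continuousAt_id.sub continuousAt_const)).inv₀ hne))).continuousWithinAt
  rw [intervalIntegral.integral_eq_sub_of_hasDerivAt key hint]
  have h0 : (0:ℝ) - b = -b := by ring
  rw [h0, Real.log_div (by linarith) (by nlinarith), show (1:ℝ) - b = 1 + -b from by ring]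
  ring

lemma Wb (x : ℝ) (h0 : 0 ≤ x) (h1 : x ≤ 1) :
    |2 + 2 * x * Real.log (x / (1 + x))| ≤ 6 := by
  have key : x * |Real.log (x / (1 + x))| ≤ 2 := by
    rcases eq_or_lt_of_le h0 with h | h
    · simp [← h]
    · have hx1 : (0:ℝ) < 1 + x := by linarith
      have habs : |Real.log (x / (1 + x))| = Real.log (1 + x) - Real.log x := by
        rw [abs_of_nonpos (Real.log_nonpos (by positivity) (by rw [div_le_one hx1]; linarith)),
          Real.log_div (ne_of_gt h) (ne_of_gt hx1)]
        ring
      have hb1 : x * Real.log (1 + x) ≤ 1 := by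
        have h2 : Real.log (1 + x) ≤ Real.log 2 := Real.log_le_log (by linarith) (by linarith)
        have h3 : Real.log 2 < 1 := by linarith [Real.log_two_lt_d9]
        nlinarith [Real.log_nonneg (show (1:ℝ) ≤ 1 + x by linarith)]
      have hb2 : x * (-Real.log x) ≤ 1 := by
        have h4 := Real.log_le_sub_one_of_pos (show (0:ℝ) < x⁻¹ by positivity)
        rw [Real.log_inv] at h4
        have h5 : x * (-Real.log x) ≤ x * (x⁻¹ - 1) := by nlinarith
        have h6 : x * (x⁻¹ - 1) = 1 - x := by field_simp
        linarith
      rw [habs]; nlinarith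
  calc |2 + 2 * x * Real.log (x / (1 + x))|
      ≤ |(2:ℝ)| + |2 * x * Real.log (x / (1 + x))| := abs_add_le _ _
    _ ≤ 2 + 2 * 2 := by
        rw [abs_of_nonneg (by norm_num : (0:ℝ) ≤ 2)]
        have : |2 * x * Real.log (x / (1 + x))| = 2 * (x * |Real.log (x / (1 + x))|) := by
          rw [abs_mul, abs_mul, abs_of_nonneg h0]
          norm_num; ring
        rw [this]; linarith
    _ ≤ 6 := by norm_num


/-- The expected value of the two-point biased rule
`Q(f;x₁,x₂) = (2x₂/(x₂−x₁)) f(x₁) − (2x₁/(x₂−x₁)) f(x₂)`, with `x₁ ~ U(0,1)` and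
`x₂ ~ U(−1,0)` independent, is the weighted integral `∫_{−1}^1 f(x) W₀(x) dx` with
`W₀(x) = 2 + 2|x| ln(|x|/(1+|x|))`. -/
theorem stmt_14 (f : ℝ → ℝ) (hf : ContinuousOn f (Set.Icc (-1) 1)) :
    (∫ x₁ in (0:ℝ)..1, ∫ x₂ in (-1:ℝ)..0,
        ((2 * x₂ / (x₂ - x₁)) * f x₁ + (-(2 * x₁) / (x₂ - x₁)) * f x₂)) =
      ∫ x in (-1:ℝ)..1, f x * (2 + 2 * |x| * Real.log (|x| / (1 + |x|))) := by
  obtain ⟨M, hM⟩ := (isCompact_Icc : IsCompact (Set.Icc (-1:ℝ) 1)).exists_bound_of_continuousOn hf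
  have hM0 : 0 ≤ M := le_trans (norm_nonneg (f 0)) (hM 0 (by norm_num))
  set s : Set ℝ := Set.Ioo 0 1 with hs_def
  set t : Set ℝ := Set.Ioo (-1) 0 with ht_def
  have hst : s ⊆ Set.Icc (-1:ℝ) 1 := fun x hx => ⟨by linarith [hx.1], le_of_lt hx.2⟩
  have htt : t ⊆ Set.Icc (-1:ℝ) 1 := fun x hx => ⟨le_of_lt hx.1, by linarith [hx.2]⟩
  -- the weight function
  set W : ℝ → ℝ := fun x => 2 + 2 * |x| * Real.log (|x| / (1 + |x|)) with hW_def
  -- Integrability of the product function G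
  have hGcont : ContinuousOn (fun p : ℝ × ℝ => -(2 * p.1) / (p.2 - p.1) * f p.2) (s ×ˢ t) := by
    apply ContinuousOn.mul
    · apply ContinuousOn.div (by fun_prop) (by fun_prop)
      rintro ⟨x, y⟩ ⟨hx, hy⟩
      have : y - x < 0 := by
        simp only [hs_def, ht_def, Set.mem_Ioo] at hx hy
        linarith [hx.1, hy.2]
      exact ne_of_lt this
    · exact hf.comp continuous_snd.continuousOn fun p hp => htt hp.2
  have hGint : Integrable (fun p : ℝ × ℝ => -(2 * p.1) / (p.2 - p.1) * f p.2)
      ((volume.restrict s).prod (volume.restrict t)) := by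
    rw [Measure.prod_restrict]
    have hms : MeasurableSet (s ×ˢ t) := measurableSet_Ioo.prod measurableSet_Ioo
    haveI : IsFiniteMeasure (((volume : Measure ℝ).prod volume).restrict (s ×ˢ t)) := by
      constructor
      rw [Measure.restrict_apply_univ, Measure.prod_prod]
      exact ENNReal.mul_lt_top (measure_Ioo_lt_top) (measure_Ioo_lt_top)
    apply Integrable.mono' (integrable_const (2 * M)) (hGcont.aestronglyMeasurable hms)
    rw [ae_restrict_iff' hms]
    filter_upwards with p hp
    obtain ⟨hp1, hp2⟩ := hp
    simp only [hs_def, ht_def, Set.mem_Ioo] at hp1 hp2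
    have hden : p.2 - p.1 < 0 := by linarith [hp1.1, hp2.2]
    have h1 : |(-(2 * p.1)) / (p.2 - p.1)| ≤ 2 := by
      rw [abs_div, abs_of_neg hden, abs_of_nonpos (by linarith [hp1.1] : -(2 * p.1) ≤ 0),
        div_le_iff₀ (by linarith)]
      nlinarith [hp1.1, hp2.2]
    have h2 : |f p.2| ≤ M := hM _ (htt ⟨hp2.1, hp2.2⟩)
    calc ‖-(2 * p.1) / (p.2 - p.1) * f p.2‖
        = |(-(2 * p.1)) / (p.2 - p.1)| * |f p.2| := by rw [Real.norm_eq_abs, abs_mul]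
      _ ≤ 2 * M := mul_le_mul h1 h2 (abs_nonneg _) (by norm_num)
  have hinner : ∀ x₁ ∈ s, (∫ x₂ in (-1:ℝ)..0,
      ((2 * x₂ / (x₂ - x₁)) * f x₁ + (-(2 * x₁) / (x₂ - x₁)) * f x₂))
      = f x₁ * (2 + 2 * x₁ * Real.log (x₁ / (1 + x₁)))
        + ∫ x₂ in t, -(2 * x₁) / (x₂ - x₁) * f x₂ := by
    intro x₁ hx₁
    have hx₁' : 0 < x₁ := hx₁.1
    have hden : ∀ x₂ ∈ Set.Icc (-1:ℝ) 0, x₂ - x₁ ≠ 0 := fun x₂ hx₂ =>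
      ne_of_lt (by linarith [hx₂.2])
    have hA : IntervalIntegrable (fun x₂ => (2 * x₂ / (x₂ - x₁)) * f x₁) volume (-1) 0 := by
      apply ContinuousOn.intervalIntegrable
      rw [Set.uIcc_of_le (by norm_num : (-1:ℝ) ≤ 0)]
      exact ((continuousOn_const.mul continuousOn_id).div
        (continuousOn_id.sub continuousOn_const) hden).mul continuousOn_const
    have hB : IntervalIntegrable (fun x₂ => -(2 * x₁) / (x₂ - x₁) * f x₂) volume (-1) 0 := by
      apply ContinuousOn.intervalIntegrable
      rw [Set.uIcc_of_le (by norm_num : (-1:ℝ) ≤ 0)]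
      apply ContinuousOn.mul
      · exact continuousOn_const.div (continuousOn_id.sub continuousOn_const) hden
      · exact hf.mono fun x hx => ⟨hx.1, by linarith [hx.2]⟩
    rw [intervalIntegral.integral_add hA hB]
    congr 1
    · rw [intervalIntegral.integral_mul_const, Ia x₁ hx₁', mul_comm]
    · rw [intervalIntegral.integral_of_le (by norm_num : (-1:ℝ) ≤ 0),
        integral_Ioc_eq_integral_Ioo]
  rw [intervalIntegral.integral_of_le (by norm_num : (0:ℝ) ≤ 1), integral_Ioc_eq_integral_Ioo,
    setIntegral_congr_fun measurableSet_Ioo hinner]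
  -- integrability of the two pieces
  have hP : IntegrableOn (fun x₁ => f x₁ * (2 + 2 * x₁ * Real.log (x₁ / (1 + x₁)))) s := by
    apply Integrable.mono' (integrable_const (M * 6))
    · apply ContinuousOn.aestronglyMeasurable _ measurableSet_Ioo
      apply ContinuousOn.mul (hf.mono hst)
      apply ContinuousOn.add continuousOn_const
      apply ContinuousOn.mul (continuousOn_const.mul continuousOn_id)
      apply ContinuousOn.log
      · exact continuousOn_id.div (continuousOn_const.add continuousOn_id)
          (fun x hx => ne_of_gt (show (0:ℝ) < 1 + x by linarith [hx.1]))
      · exact fun x hx =>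
          ne_of_gt (show (0:ℝ) < x / (1 + x) from div_pos hx.1 (by linarith [hx.1]))
    · rw [ae_restrict_iff' measurableSet_Ioo]
      filter_upwards with x hx
      have h6 := Wb x (le_of_lt hx.1) (le_of_lt hx.2)
      rw [Real.norm_eq_abs, abs_mul]
      exact mul_le_mul (hM x (hst hx)) h6 (abs_nonneg _) hM0
  have hQ : IntegrableOn (fun x₁ => ∫ x₂ in t, -(2 * x₁) / (x₂ - x₁) * f x₂) s :=
    hGint.integral_prod_left
  rw [integral_add hP hQ]
  -- Fubini on the second piece
  have hswap : (∫ x₁ in s, ∫ x₂ in t, -(2 * x₁) / (x₂ - x₁) * f x₂)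
      = ∫ x₂ in t, ∫ x₁ in s, -(2 * x₁) / (x₂ - x₁) * f x₂ :=
    integral_integral_swap (by exact hGint)
  rw [hswap]
  -- compute the inner integral over s
  have hinner2 : ∀ b ∈ t, (∫ x₁ in s, -(2 * x₁) / (b - x₁) * f b)
      = f b * (2 + 2 * |b| * Real.log (|b| / (1 + |b|))) := by
    intro b hb
    have hbneg : b < 0 := hb.2
    rw [integral_mul_const]
    have h7 := Ib b hbneg
    rw [intervalIntegral.integral_of_le (by norm_num : (0:ℝ) ≤ 1),
      integral_Ioc_eq_integral_Ioo] at h7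
    rw [h7, abs_of_neg hbneg]
    ring
  rw [setIntegral_congr_fun measurableSet_Ioo hinner2]
  -- rewrite the first piece with absolute values
  have hPs : Set.EqOn (fun x => f x * (2 + 2 * x * Real.log (x / (1 + x))))
      (fun x => f x * (2 + 2 * |x| * Real.log (|x| / (1 + |x|)))) s := fun x hx => by
    simp only [abs_of_pos hx.1]
  rw [setIntegral_congr_fun measurableSet_Ioo hPs]
  -- integrability for the right-hand side split
  have hT : IntegrableOn (fun x => f x * (2 + 2 * |x| * Real.log (|x| / (1 + |x|)))) t := by
    apply Integrable.mono' (integrable_const (M * 6))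
    · apply ContinuousOn.aestronglyMeasurable _ measurableSet_Ioo
      apply ContinuousOn.mul (hf.mono htt)
      apply ContinuousOn.add continuousOn_const
      apply ContinuousOn.mul (continuousOn_const.mul continuous_abs.continuousOn)
      apply ContinuousOn.log
      · exact continuous_abs.continuousOn.div
          (continuousOn_const.add continuous_abs.continuousOn)
          (fun x hx => ne_of_gt (by positivity))
      · intro x hx
        have h1 : x ≠ 0 := ne_of_lt hx.2
        positivity
    · rw [ae_restrict_iff' measurableSet_Ioo]
      filter_upwards with x hx
      have h6 := Wb |x| (abs_nonneg x) (by rw [abs_of_neg hx.2]; linarith [hx.1])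
      rw [Real.norm_eq_abs, abs_mul]
      exact mul_le_mul (hM x (htt hx)) h6 (abs_nonneg _) hM0
  have hR1 : IntegrableOn (fun x => f x * (2 + 2 * |x| * Real.log (|x| / (1 + |x|))))
      (Set.Ioc (-1) 0) := by
    unfold IntegrableOn
    rw [← Measure.restrict_congr_set Ioo_ae_eq_Ioc]
    exact hT
  have hR2 : IntegrableOn (fun x => f x * (2 + 2 * |x| * Real.log (|x| / (1 + |x|))))
      (Set.Ioc 0 1) := by
    unfold IntegrableOn
    rw [← Measure.restrict_congr_set Ioo_ae_eq_Ioc]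
    exact (hP.congr_fun hPs measurableSet_Ioo)
  rw [intervalIntegral.integral_of_le (by norm_num : (-1:ℝ) ≤ 1),
    ← Set.Ioc_union_Ioc_eq_Ioc (by norm_num : (-1:ℝ) ≤ 0) (by norm_num : (0:ℝ) ≤ 1),
    setIntegral_union (Set.Ioc_disjoint_Ioc_of_le le_rfl) measurableSet_Ioc hR1 hR2,
    integral_Ioc_eq_integral_Ioo, integral_Ioc_eq_integral_Ioo]
  exact add_comm _ _
end
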